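/- Let X : Ω → ℝⁿ and ε : Ω → ℝᵐ be square-integrable random vectors on a probability space, with X and ε independent and E[ε] = 0. Let F ∈ ℝ^{m×n}, set Y = F X + ε, Γ_X = E[X Xᵀ], Γ_Y = E[Y Yᵀ], and suppose L_Y has full column rank with Γ_Y = L_Y L_Yᵀ. Let M be a best rank-≤r approximation of C = Γ_X Fᵀ (L_Y†)ᵀ in the Frobenius norm, and set Â = M L_Y†. Then rank(Â) ≤ r and for every A ∈ ℝ^{n×m} with rank(A) ≤ r, E‖Â Y − X‖₂² ≤ E‖A Y − X‖₂². -/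

import Mathlib

open Matrix MeasureTheory

/-- Second (cross-)moment matrix `E[X Yᵀ]` of two random vectors. -/
noncomputable def secondMoment {Ω : Type} [MeasurableSpace Ω] (μ : Measure Ω)
    {n m : ℕ} (X : Ω → Fin n → ℝ) (Y : Ω → Fin m → ℝ) : Matrix (Fin n) (Fin m) ℝ :=
  Matrix.of fun i j => ∫ ω, X ω i * Y ω j ∂μ

/-- Frobenius norm of a real matrix. -/
noncomputable def frob {m n : ℕ} (A : Matrix (Fin m) (Fin n) ℝ) : ℝ :=
  Real.sqrt (∑ i, ∑ j, (A i j) ^ 2)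

/-- `Ad` is the Moore–Penrose pseudoinverse of `A` (the four Penrose conditions). -/
def IsMoorePenrose {m n : ℕ} (A : Matrix (Fin m) (Fin n) ℝ)
    (Ad : Matrix (Fin n) (Fin m) ℝ) : Prop :=
  A * Ad * A = A ∧ Ad * A * Ad = Ad ∧ (A * Ad)ᵀ = A * Ad ∧ (Ad * A)ᵀ = Ad * A

/-!
For any `A`, `E‖A Y - X‖² = tr(A Γ_Y Aᵀ - A Γ_YX - Γ_YXᵀ Aᵀ + Γ_X)` with `Γ_YX = E[Y Xᵀ]`.
The columns of `Γ_YX` lie in the range of `Γ_Y = L Lᵀ`, so `L L† Γ_YX = Γ_YX`, and completing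
the square gives `E‖A Y - X‖² = ‖C - A L‖_F² + const` with `C = (L† Γ_YX)ᵀ`. For `Y = F X + ε`,
independence and `E ε = 0` give `Γ_YX = F Γ_X`, so this `C` is `Γ_X Fᵀ (L†)ᵀ`. Finally
`L† L = 1` gives `Â L = M`, while `A L` has rank at most `r` whenever `A` does.
-/

open ProbabilityTheory

section SecondMoment

variable {Ω : Type} [MeasurableSpace Ω] {μ : Measure Ω} {a b c : ℕ}

lemma integrable_mul_apply {f : Ω → Fin a → ℝ} {g : Ω → Fin b → ℝ}
    (hf : MemLp f 2 μ) (hg : MemLp g 2 μ) (i : Fin a) (j : Fin b) :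
    Integrable (fun ω => f ω i * g ω j) μ :=
  (hf.eval i).integrable_mul (hg.eval j)

lemma MeasureTheory.MemLp.mulVec (A : Matrix (Fin c) (Fin a) ℝ) {f : Ω → Fin a → ℝ}
    (hf : MemLp f 2 μ) :
    MemLp (fun ω => A *ᵥ f ω) 2 μ :=
  (LinearMap.toContinuousLinearMap A.mulVecLin).comp_memLp' hf

lemma secondMoment_transpose (f : Ω → Fin a → ℝ) (g : Ω → Fin b → ℝ) :
    (secondMoment μ f g)ᵀ = secondMoment μ g f := by
  ext i j
  simp only [secondMoment, transpose_apply, of_apply, mul_comm]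

lemma secondMoment_add_left {f g : Ω → Fin a → ℝ} {h : Ω → Fin b → ℝ}
    (hf : MemLp f 2 μ) (hg : MemLp g 2 μ) (hh : MemLp h 2 μ) :
    secondMoment μ (fun ω => f ω + g ω) h = secondMoment μ f h + secondMoment μ g h := by
  ext i j
  simp only [secondMoment, of_apply, Matrix.add_apply, Pi.add_apply, add_mul]
  exact integral_add (integrable_mul_apply hf hh i j) (integrable_mul_apply hg hh i j)

lemma secondMoment_sub_left {f g : Ω → Fin a → ℝ} {h : Ω → Fin b → ℝ}
    (hf : MemLp f 2 μ) (hg : MemLp g 2 μ) (hh : MemLp h 2 μ) :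
    secondMoment μ (fun ω => f ω - g ω) h = secondMoment μ f h - secondMoment μ g h := by
  ext i j
  simp only [secondMoment, of_apply, Matrix.sub_apply, Pi.sub_apply, sub_mul]
  exact integral_sub (integrable_mul_apply hf hh i j) (integrable_mul_apply hg hh i j)

lemma secondMoment_sub_right {f : Ω → Fin a → ℝ} {g h : Ω → Fin b → ℝ}
    (hf : MemLp f 2 μ) (hg : MemLp g 2 μ) (hh : MemLp h 2 μ) :
    secondMoment μ f (fun ω => g ω - h ω) = secondMoment μ f g - secondMoment μ f h := by
  rw [← secondMoment_transpose, secondMoment_sub_left hg hh hf, transpose_sub,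
    secondMoment_transpose, secondMoment_transpose]

lemma secondMoment_mulVec_left (A : Matrix (Fin c) (Fin a) ℝ) {f : Ω → Fin a → ℝ}
    {g : Ω → Fin b → ℝ} (hf : MemLp f 2 μ) (hg : MemLp g 2 μ) :
    secondMoment μ (fun ω => A *ᵥ f ω) g = A * secondMoment μ f g := by
  ext i j
  simp only [secondMoment, of_apply, mul_apply, mulVec, dotProduct, Finset.sum_mul, mul_assoc]
  rw [integral_finsetSum _ fun k _ => (integrable_mul_apply hf hg k j).const_mul _]
  simp only [integral_const_mul]

lemma secondMoment_mulVec_right (A : Matrix (Fin c) (Fin b) ℝ) {f : Ω → Fin a → ℝ}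
    {g : Ω → Fin b → ℝ} (hf : MemLp f 2 μ) (hg : MemLp g 2 μ) :
    secondMoment μ f (fun ω => A *ᵥ g ω) = secondMoment μ f g * Aᵀ := by
  rw [← secondMoment_transpose, secondMoment_mulVec_left A hg hf, transpose_mul,
    secondMoment_transpose]

lemma secondMoment_eq_zero_of_indepFun [IsFiniteMeasure μ] {f : Ω → Fin a → ℝ}
    {g : Ω → Fin b → ℝ} (hf : MemLp f 2 μ) (hg : MemLp g 2 μ) (hfg : IndepFun f g μ)
    (hmean : ∫ ω, f ω ∂μ = 0) : secondMoment μ f g = 0 := by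
  ext i j
  have hfi : ∫ ω, f ω i ∂μ = 0 := by
    rw [← eval_integral (fun k => (hf.eval k).integrable one_le_two), hmean, Pi.zero_apply]
  have hij := (hfg.comp (measurable_pi_apply i) (measurable_pi_apply j))
    |>.integral_mul_eq_mul_integral (hf.eval i).aestronglyMeasurable
      (hg.eval j).aestronglyMeasurable
  simpa [secondMoment, hfi] using hij

lemma trace_secondMoment_self {f : Ω → Fin a → ℝ} (hf : MemLp f 2 μ) :
    (secondMoment μ f f).trace = ∫ ω, ∑ i, f ω i ^ 2 ∂μ := by
  rw [integral_finsetSum _ fun i _ => (hf.eval i).integrable_sq]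
  simp only [trace, diag, secondMoment, of_apply, sq]

lemma secondMoment_eq_zero_of_secondMoment_self_eq_zero {f : Ω → Fin a → ℝ}
    (hf : MemLp f 2 μ) (h : secondMoment μ f f = 0) (g : Ω → Fin b → ℝ) :
    secondMoment μ f g = 0 := by
  have hint : ∫ ω, ∑ i, f ω i ^ 2 ∂μ = 0 := by
    rw [← trace_secondMoment_self hf, h, trace_zero]
  have hae := (integral_eq_zero_iff_of_nonneg (fun ω => by positivity)
    (integrable_finsetSum _ fun i _ => (hf.eval i).integrable_sq)).1 hint
  ext i j
  refine integral_eq_zero_of_ae ?_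
  filter_upwards [hae] with ω hω
  have hfi : f ω i = 0 := by
    simpa using (Finset.sum_eq_zero_iff_of_nonneg fun k _ => sq_nonneg (f ω k)).1 hω i
      (Finset.mem_univ i)
  simp [hfi]

end SecondMoment

section MatrixFacts

variable {n m p : ℕ}

lemma frob_sq_eq_trace (A : Matrix (Fin n) (Fin p) ℝ) : frob A ^ 2 = (A * Aᵀ).trace := by
  rw [frob, Real.sq_sqrt (by positivity)]
  simp [trace, mul_apply, sq]

lemma IsMoorePenrose.mul_self_eq_one {L : Matrix (Fin m) (Fin p) ℝ}
    {Ld : Matrix (Fin p) (Fin m) ℝ} (h : IsMoorePenrose L Ld) (hrank : L.rank = p) :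
    Ld * L = 1 := by
  have hzero : L * (Ld * L - 1) = 0 := by
    rw [Matrix.mul_sub, ← Matrix.mul_assoc, h.1, Matrix.mul_one, sub_self]
  have hle := rank_add_rank_le_card_of_mul_eq_zero hzero
  have h0 : (Ld * L - 1).rank = 0 := by
    rw [Fintype.card_fin] at hle
    omega
  rw [Matrix.rank, Submodule.finrank_eq_zero, LinearMap.range_eq_bot, ← toLin'_apply',
    LinearEquiv.map_eq_zero_iff] at h0
  exact sub_eq_zero.1 h0

lemma trace_quadratic_eq_frob_sq_sub {A : Matrix (Fin n) (Fin m) ℝ}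
    {L : Matrix (Fin m) (Fin p) ℝ} {C : Matrix (Fin n) (Fin p) ℝ}
    {G : Matrix (Fin m) (Fin n) ℝ} (hG : L * Cᵀ = G) :
    (A * (L * Lᵀ) * Aᵀ - A * G - Gᵀ * Aᵀ).trace = frob (C - A * L) ^ 2 - frob C ^ 2 := by
  subst hG
  rw [frob_sq_eq_trace, frob_sq_eq_trace]
  simp only [transpose_sub, transpose_mul, transpose_transpose, Matrix.mul_sub, Matrix.sub_mul,
    Matrix.mul_assoc, trace_sub]
  ring

end MatrixFacts

section LinearEstimation

variable {Ω : Type} [MeasurableSpace Ω] {μ : Measure Ω} {n m p : ℕ}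
  {X : Ω → Fin n → ℝ} {Y : Ω → Fin m → ℝ}

lemma secondMoment_residual (hX : MemLp X 2 μ) (hY : MemLp Y 2 μ)
    (A : Matrix (Fin n) (Fin m) ℝ) :
    secondMoment μ (fun ω => A *ᵥ Y ω - X ω) (fun ω => A *ᵥ Y ω - X ω)
      = A * secondMoment μ Y Y * Aᵀ - A * secondMoment μ Y X
        - (secondMoment μ Y X)ᵀ * Aᵀ + secondMoment μ X X := by
  have hAY := hY.mulVec A
  have hZ : MemLp (fun ω => A *ᵥ Y ω - X ω) 2 μ := hAY.sub hX
  rw [secondMoment_sub_left hAY hX hZ, secondMoment_sub_right hAY hAY hX,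
    secondMoment_sub_right hX hAY hX, secondMoment_mulVec_left A hY hAY,
    secondMoment_mulVec_left A hY hX, secondMoment_mulVec_right A hY hY,
    secondMoment_mulVec_right A hX hY, secondMoment_transpose, Matrix.mul_assoc]
  abel

/-- The columns of `E[Y gᵀ]` lie in the range of `Γ_Y = L Lᵀ`, on which `L L†` is the
identity: `(1 - L L†) Y` has zero second moment, hence vanishes almost surely. -/
lemma IsMoorePenrose.mul_mul_secondMoment {L : Matrix (Fin m) (Fin p) ℝ}
    {Ld : Matrix (Fin p) (Fin m) ℝ} (hLd : IsMoorePenrose L Ld) (hY : MemLp Y 2 μ)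
    (hL : secondMoment μ Y Y = L * Lᵀ) {k : ℕ} {g : Ω → Fin k → ℝ} (hg : MemLp g 2 μ) :
    L * Ld * secondMoment μ Y g = secondMoment μ Y g := by
  set Q : Matrix (Fin m) (Fin m) ℝ := 1 - L * Ld
  have hQL : Q * L = 0 := by rw [Matrix.sub_mul, Matrix.one_mul, hLd.1, sub_self]
  have hQY : secondMoment μ (fun ω => Q *ᵥ Y ω) (fun ω => Q *ᵥ Y ω) = 0 := by
    rw [secondMoment_mulVec_left Q hY (hY.mulVec Q), secondMoment_mulVec_right Q hY hY, hL,
      ← Matrix.mul_assoc, ← Matrix.mul_assoc, hQL, Matrix.zero_mul, Matrix.zero_mul]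
  have hQg := secondMoment_eq_zero_of_secondMoment_self_eq_zero (hY.mulVec Q) hQY g
  rw [secondMoment_mulVec_left Q hY hg, Matrix.sub_mul, Matrix.one_mul, sub_eq_zero] at hQg
  exact hQg.symm

theorem integral_sq_residual_eq (hX : MemLp X 2 μ) (hY : MemLp Y 2 μ)
    {L : Matrix (Fin m) (Fin p) ℝ} {Ld : Matrix (Fin p) (Fin m) ℝ}
    (hL : secondMoment μ Y Y = L * Lᵀ) (hLd : IsMoorePenrose L Ld)
    (A : Matrix (Fin n) (Fin m) ℝ) :
    ∫ ω, ∑ i, (A *ᵥ Y ω - X ω) i ^ 2 ∂μ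
      = frob ((Ld * secondMoment μ Y X)ᵀ - A * L) ^ 2
        + ((secondMoment μ X X).trace - frob (Ld * secondMoment μ Y X)ᵀ ^ 2) := by
  have hG : L * (Ld * secondMoment μ Y X)ᵀᵀ = secondMoment μ Y X := by
    rw [transpose_transpose, ← Matrix.mul_assoc, hLd.mul_mul_secondMoment hY hL hX]
  have hZ : MemLp (fun ω => A *ᵥ Y ω - X ω) 2 μ := (hY.mulVec A).sub hX
  rw [← trace_secondMoment_self hZ, secondMoment_residual hX hY A, hL,
    trace_add, trace_quadratic_eq_frob_sq_sub hG]
  ring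

theorem integral_sq_residual_le_of_best_approx (hX : MemLp X 2 μ) (hY : MemLp Y 2 μ)
    {L : Matrix (Fin m) (Fin p) ℝ} {Ld : Matrix (Fin p) (Fin m) ℝ}
    (hL : secondMoment μ Y Y = L * Lᵀ) (hLd : IsMoorePenrose L Ld) (hrank : L.rank = p)
    {r : ℕ} {M : Matrix (Fin n) (Fin p) ℝ}
    (hM : ∀ N : Matrix (Fin n) (Fin p) ℝ, N.rank ≤ r →
      frob ((Ld * secondMoment μ Y X)ᵀ - M) ≤ frob ((Ld * secondMoment μ Y X)ᵀ - N))
    (A : Matrix (Fin n) (Fin m) ℝ) (hA : A.rank ≤ r) :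
    ∫ ω, ∑ i, ((M * Ld) *ᵥ Y ω - X ω) i ^ 2 ∂μ ≤ ∫ ω, ∑ i, (A *ᵥ Y ω - X ω) i ^ 2 ∂μ := by
  rw [integral_sq_residual_eq hX hY hL hLd, integral_sq_residual_eq hX hY hL hLd,
    Matrix.mul_assoc, hLd.mul_self_eq_one hrank, Matrix.mul_one]
  have hAL := hM (A * L) ((rank_mul_le_left A L).trans hA)
  gcongr
  exact Real.sqrt_nonneg _

end LinearEstimation

theorem inverse_end_to_end_optimal {Ω : Type} [MeasurableSpace Ω]
    (μ : Measure Ω) [IsProbabilityMeasure μ] {n m p r : ℕ}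
    (X : Ω → Fin n → ℝ) (ε : Ω → Fin m → ℝ)
    (hX : MemLp X 2 μ) (hε : MemLp ε 2 μ)
    (hindep : ProbabilityTheory.IndepFun X ε μ)
    (hmean : (∫ ω, ε ω ∂μ) = 0)
    (F : Matrix (Fin m) (Fin n) ℝ)
    (LY : Matrix (Fin m) (Fin p) ℝ) (hLYrank : LY.rank = p)
    (hLY : secondMoment μ (fun ω => F *ᵥ X ω + ε ω) (fun ω => F *ᵥ X ω + ε ω)
        = LY * LYᵀ)
    (LYd : Matrix (Fin p) (Fin m) ℝ) (hLYd : IsMoorePenrose LY LYd)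
    (M : Matrix (Fin n) (Fin p) ℝ)
    (hMrank : M.rank ≤ r)
    (hMbest : ∀ N : Matrix (Fin n) (Fin p) ℝ, N.rank ≤ r →
      frob (secondMoment μ X X * Fᵀ * LYdᵀ - M)
        ≤ frob (secondMoment μ X X * Fᵀ * LYdᵀ - N)) :
    (M * LYd).rank ≤ r ∧
      ∀ A : Matrix (Fin n) (Fin m) ℝ, A.rank ≤ r →
        ∫ ω, ∑ i, ((M * LYd) *ᵥ (F *ᵥ X ω + ε ω) - X ω) i ^ 2 ∂μ
          ≤ ∫ ω, ∑ i, (A *ᵥ (F *ᵥ X ω + ε ω) - X ω) i ^ 2 ∂μ := by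
  have hY : MemLp (fun ω => F *ᵥ X ω + ε ω) 2 μ := (hX.mulVec F).add hε
  have hYX : secondMoment μ (fun ω => F *ᵥ X ω + ε ω) X = F * secondMoment μ X X := by
    rw [secondMoment_add_left (hX.mulVec F) hε hX, secondMoment_mulVec_left F hX hX,
      secondMoment_eq_zero_of_indepFun hε hX hindep.symm hmean, add_zero]
  have hC : secondMoment μ X X * Fᵀ * LYdᵀ
      = (LYd * secondMoment μ (fun ω => F *ᵥ X ω + ε ω) X)ᵀ := by
    rw [hYX, transpose_mul, transpose_mul, secondMoment_transpose, Matrix.mul_assoc]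
  rw [hC] at hMbest
  exact ⟨(rank_mul_le_left M LYd).trans hMrank,
    integral_sq_residual_le_of_best_approx hX hY hLY hLYd hLYrank hMbest⟩
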